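/- Let y be an involution in S_n and w ∈ A(y) an atom. If (i,j) and (k,l) are cycles of y with i < k and j < l, then w(k) ≥ w(l) > w(i) ≥ w(j). -/

import Mathlib

open scoped Classical

noncomputable section

/-- The simple transposition `s_i` in `S_n` (0-indexed: swaps `i` and `i+1`). -/
def simpleT (n i : ℕ) : Equiv.Perm (Fin n) :=
  if h : i + 1 < n then Equiv.swap ⟨i, Nat.lt_of_succ_lt h⟩ ⟨i + 1, h⟩ else 1

/-- The product of the word `l` of simple transpositions. -/
def wordProd (n : ℕ) (l : List ℕ) : Equiv.Perm (Fin n) :=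
  (l.map (simpleT n)).prod

/-- The Coxeter length of a permutation: minimal length of a word of simple
transpositions with product `w`. -/
def len (n : ℕ) (w : Equiv.Perm (Fin n)) : ℕ :=
  sInf {p | ∃ l : List ℕ, l.length = p ∧ wordProd n l = w}

/-- One step of the (right) Demazure / 0-Hecke product: `w ∘ s_i`. -/
def demStepR (n : ℕ) (w : Equiv.Perm (Fin n)) (i : ℕ) : Equiv.Perm (Fin n) :=
  if len n w < len n (w * simpleT n i) then w * simpleT n i else w

/-- One step of the (left) Demazure / 0-Hecke product: `s_i ∘ w`. -/
def demStepL (n i : ℕ) (w : Equiv.Perm (Fin n)) : Equiv.Perm (Fin n) :=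
  if len n w < len n (simpleT n i * w) then simpleT n i * w else w

/-- The Demazure product of the word `l`: `s_{a_1} ∘ s_{a_2} ∘ ⋯ ∘ s_{a_p}`. -/
def demWord (n : ℕ) (l : List ℕ) : Equiv.Perm (Fin n) :=
  l.foldl (demStepR n) 1

/-- `w⁻¹ ∘ w = y` for the Demazure product: expressed via a reduced word `l` of `w`,
as `demWord (l.reverse ++ l) = y` (note `l.reverse` is a reduced word of `w⁻¹`). -/
def DemSelf (n : ℕ) (w y : Equiv.Perm (Fin n)) : Prop :=
  ∃ l : List ℕ, wordProd n l = w ∧ l.length = len n w ∧ demWord n (l.reverse ++ l) = y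

/-- `w` is an atom of the involution `y`: a minimal-length permutation with
`w⁻¹ ∘ w = y` under the Demazure product. -/
def IsAtomOf (n : ℕ) (y w : Equiv.Perm (Fin n)) : Prop :=
  DemSelf n w y ∧ ∀ w', DemSelf n w' y → len n w ≤ len n w'

/-- The number of cycles (2-cycles together with fixed points) of an involution `y`. -/
def cycCount (n : ℕ) (y : Equiv.Perm (Fin n)) : ℕ :=
  (Finset.univ.filter fun i : Fin n => i ≤ y i).card

/-- The minimal length of an involution word for `y`
(`y = s_{a_1} ⊳ ⋯ ⊳ s_{a_p}`, equivalently `y = demWord (a.reverse ++ a)`). -/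
def ihat (n : ℕ) (y : Equiv.Perm (Fin n)) : ℕ :=
  sInf {p | ∃ a : List ℕ, a.length = p ∧ demWord n (a.reverse ++ a) = y}

/-- Bruhat order on `S_n` via the subword property. -/
def BruhatLE (n : ℕ) (u v : Equiv.Perm (Fin n)) : Prop :=
  ∀ l : List ℕ, wordProd n l = v → l.length = len n v →
    ∃ l' : List ℕ, l'.Sublist l ∧ wordProd n l' = u ∧ l'.length = len n u

/-- `y` standardizes (as a word `b` on a finite alphabet of naturals) to the
permutation `y` of positions: `y i` is the rank of the letter `b i`. -/
def stdEq {k : ℕ} (b : Fin k → ℕ) (y : Equiv.Perm (Fin k)) : Prop :=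
  Function.Injective b ∧
    ∀ i, (y i : ℕ) = (Finset.univ.filter fun j => b j < b i).card

/-- `q` is an inverse block atom of the block involution `b`: a word on the same
alphabet whose standardization is an inverse atom of `std b`. -/
def IsInvBlockAtomOf {k : ℕ} (b q : Fin k → ℕ) : Prop :=
  Set.range q = Set.range b ∧
    ∃ y w : Equiv.Perm (Fin k), stdEq b y ∧ y * y = 1 ∧ stdEq q w ∧ IsAtomOf k y w⁻¹

/-- Positions `p` and `q` (0-indexed) lie in the same block of the composition `μ`. -/
def SameBlock (μ : List ℕ) (p q : ℕ) : Prop :=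
  ∀ k ≤ μ.length, ((μ.take k).sum ≤ p ↔ (μ.take k).sum ≤ q)

/-- The starting position (0-indexed) of the block of `μ` containing position `p`. -/
def blockStart (μ : List ℕ) (p : ℕ) : ℕ :=
  (Finset.range (μ.length + 1)).sup fun k =>
    if (μ.take k).sum ≤ p then (μ.take k).sum else 0

/-- The 0-Hecke action `π ∘_μ s_i` on `μ`-involutions: if the values `i, i+1` of `π`
lie in different blocks it is `s_i ∘ π`; if they lie in the same block `B` it is
`s_i ∘ π ∘ s_r`, where `r` is the position (global, 0-indexed) within the block
corresponding to the relative value of `i` in `B`. -/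
def muAct (n : ℕ) (μ : List ℕ) (π : Equiv.Perm (Fin n)) (i : ℕ) : Equiv.Perm (Fin n) :=
  if h : i + 1 < n then
    let a : Fin n := ⟨i, Nat.lt_of_succ_lt h⟩
    let b : Fin n := ⟨i + 1, h⟩
    if SameBlock μ ((π⁻¹ a : Fin n) : ℕ) ((π⁻¹ b : Fin n) : ℕ) then
      demStepR n (demStepL n i π)
        (blockStart μ ((π⁻¹ a : Fin n) : ℕ) +
          (Finset.univ.filter fun p' : Fin n =>
            SameBlock μ (p' : ℕ) ((π⁻¹ a : Fin n) : ℕ) ∧ (π p' : ℕ) < i).card)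
    else demStepL n i π
  else π

/-- `e ∘_μ s_{a_1} ∘_μ ⋯ ∘_μ s_{a_p}` for a word `l = (a_1, …, a_p)`. -/
def muWord (n : ℕ) (μ : List ℕ) (l : List ℕ) : Equiv.Perm (Fin n) :=
  l.foldl (muAct n μ) 1

/-- `ℓ_μ(π)`: the minimal length of a `μ`-word for `π`. -/
def lmu (n : ℕ) (μ : List ℕ) (π : Equiv.Perm (Fin n)) : ℕ :=
  sInf {p | ∃ l : List ℕ, l.length = p ∧ muWord n μ l = π}

/-- The `i`-th block of the one-line notation of `π` with respect to `μ`, as a word. -/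
def blockWord (n : ℕ) (μ : List ℕ) (π : Equiv.Perm (Fin n)) (i : Fin μ.length) :
    Fin (μ.get i) → ℕ :=
  fun j =>
    if h : (μ.take (i : ℕ)).sum + (j : ℕ) < n then
      (π ⟨(μ.take (i : ℕ)).sum + (j : ℕ), h⟩ : ℕ)
    else 0

/-- `π` is a `μ`-involution: `μ` is a composition of `n` and every block of `π`
standardizes to an involution. -/
def IsMuInv (n : ℕ) (μ : List ℕ) (π : Equiv.Perm (Fin n)) : Prop :=
  μ.sum = n ∧ (∀ x ∈ μ, 0 < x) ∧
    ∀ i : Fin μ.length,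
      ∃ y : Equiv.Perm (Fin (μ.get i)), stdEq (blockWord n μ π i) y ∧ y * y = 1

/-- `w` is a `μ`-atom of `π`: a minimal-length permutation one of whose reduced words
is a reduced `μ`-word for `π`. -/
def IsMuAtom (n : ℕ) (μ : List ℕ) (π w : Equiv.Perm (Fin n)) : Prop :=
  ∃ l : List ℕ, wordProd n l = w ∧ l.length = len n w ∧
    muWord n μ l = π ∧ l.length = lmu n μ π

/-- `ν` refines `μ`: every partial sum of `μ` is a partial sum of `ν`. -/
def Refines (ν μ : List ℕ) : Prop :=
  ∀ k ≤ μ.length, ∃ k' ≤ ν.length, (ν.take k').sum = (μ.take k).sum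

/-- `μ`-Bruhat order via the subword property on reduced `μ`-words. -/
def MuBruhatLE (n : ℕ) (μ : List ℕ) (π τ : Equiv.Perm (Fin n)) : Prop :=
  ∀ l : List ℕ, muWord n μ l = τ → l.length = lmu n μ τ →
    ∃ l' : List ℕ, l'.Sublist l ∧ muWord n μ l' = π ∧ l'.length = lmu n μ π

/-- The longest element `w_0` of `S_n`. -/
def longest (n : ℕ) : Equiv.Perm (Fin n) :=
  ⟨Fin.rev, Fin.rev, Fin.rev_rev, Fin.rev_rev⟩

/-- The divided difference operator `∂_i f = (f - s_i f)/(x_i - x_{i+1})`. -/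
def ddiff (n i : ℕ) (f : MvPolynomial (Fin n) ℚ) : MvPolynomial (Fin n) ℚ :=
  if h : ∃ hi : i + 1 < n, ∃ g : MvPolynomial (Fin n) ℚ,
      f - MvPolynomial.rename (⇑(simpleT n i)) f =
        g * (MvPolynomial.X (⟨i, Nat.lt_of_succ_lt hi⟩ : Fin n) -
          MvPolynomial.X (⟨i + 1, hi⟩ : Fin n))
  then h.choose_spec.choose else 0

/-- A choice of reduced word for `v`. -/
def aRedWord (n : ℕ) (v : Equiv.Perm (Fin n)) : List ℕ :=
  if h : ∃ l : List ℕ, wordProd n l = v ∧ l.length = len n v then h.choose else []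

/-- The Schubert polynomial of `w`: obtained from the staircase monomial
`S_{w_0} = x_1^{n-1} ⋯ x_{n-1}` by applying divided differences along a reduced
word of `w_0 w` (so that `w_0 · s_{a_1} ⋯ s_{a_p} = w`). -/
def schubert (n : ℕ) (w : Equiv.Perm (Fin n)) : MvPolynomial (Fin n) ℚ :=
  (aRedWord n (longest n * w)).foldl (fun f i => ddiff n i f)
    (∏ i : Fin n, MvPolynomial.X i ^ (n - 1 - (i : ℕ)))

/-- The involution Schubert polynomial `S^I_y = ∑_{w ∈ A(y)} S_w`. -/
def invSchubert (n : ℕ) (y : Equiv.Perm (Fin n)) : MvPolynomial (Fin n) ℚ :=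
  ∑ w ∈ Finset.univ.filter (fun w => IsAtomOf n y w), schubert n w

/-- The `μ`-involution Schubert polynomial `S^μ_π = ∑_{w ∈ A_μ(π)} S_w`. -/
def muSchubert (n : ℕ) (μ : List ℕ) (π : Equiv.Perm (Fin n)) : MvPolynomial (Fin n) ℚ :=
  ∑ w ∈ Finset.univ.filter (fun w => IsMuAtom n μ π w), schubert n w

/-- The parabolic (Young) subgroup `S_μ ≤ S_n`, generated by the simple
transpositions not crossing a block boundary of `μ`. -/
def parabolic (n : ℕ) (μ : List ℕ) : Subgroup (Equiv.Perm (Fin n)) :=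
  Subgroup.closure
    {g | ∃ i : ℕ, i + 1 < n ∧ (∀ k ≤ μ.length, (μ.take k).sum ≠ i + 1) ∧ g = simpleT n i}

/-- `z = t^I_{ab}(y)` nontrivially, encoded via atoms: some atom `v` of `y` satisfies
`v ⋖ v t_{ab}` and `v t_{ab}` is an atom of `z`. -/
def tOpI (n : ℕ) (y z : Equiv.Perm (Fin n)) (a b : Fin n) : Prop :=
  ∃ v : Equiv.Perm (Fin n), IsAtomOf n y v ∧
    len n (v * Equiv.swap a b) = len n v + 1 ∧ IsAtomOf n z (v * Equiv.swap a b)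

/-- The local move on one-line notations: a consecutive subsequence `c, a, b`
(with `a < b < c`) of `u` is replaced by `b, c, a` in `v`, all other entries equal. -/
def LocalMove (n : ℕ) (u v : Equiv.Perm (Fin n)) : Prop :=
  ∃ p : ℕ, ∃ hp : p + 2 < n, ∃ a b c : Fin n, a < b ∧ b < c ∧
    u ⟨p, by omega⟩ = c ∧ u ⟨p + 1, by omega⟩ = a ∧ u ⟨p + 2, hp⟩ = b ∧
    v ⟨p, by omega⟩ = b ∧ v ⟨p + 1, by omega⟩ = c ∧ v ⟨p + 2, hp⟩ = a ∧
    ∀ q : Fin n, (q : ℕ) ≠ p → (q : ℕ) ≠ p + 1 → (q : ℕ) ≠ p + 2 → u q = v q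

/-- The values `x, x'` form a (non-fixed-point) block cycle of the word `b`. -/
def Paired (m : ℕ) (b : Fin m → ℕ) (x x' : ℕ) : Prop :=
  ∃ y : Equiv.Perm (Fin m), stdEq b y ∧ ∃ i : Fin m, b i = x ∧ b (y i) = x' ∧ y i ≠ i

/-- `q` is an inverse block atom of the block involution obtained from `b` by
restricting its cycle structure to the value set of `q` (with unmatched values
becoming fixed points). -/
def RestrictedInvBlockAtom (m : ℕ) (b : Fin m → ℕ) (k : ℕ) (q : Fin k → ℕ) : Prop :=
  ∃ bL : Fin k → ℕ, ∃ yL : Equiv.Perm (Fin k),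
    stdEq bL yL ∧ yL * yL = 1 ∧ Set.range bL = Set.range q ∧
    (∀ i j : Fin k, (yL i = j ∧ i ≠ j) ↔ Paired m b (bL i) (bL j)) ∧
    IsInvBlockAtomOf bL q

end

/-!
Induct on the length of the atom `w`. Removing the last letter `s_a` of a reduced word of `w`
leaves an atom `w'` of the involution `z = w'⁻¹ ∘ w'`, with `w = w' s_a`, `w'(a) < w'(a+1)`,
`z(a) < z(a+1)` and `y = s_a ∘ z ∘ s_a`. Either `z` fixes `a` and `a+1`, and then `y = z s_a`
is `z` with the extra cycle `(a, a+1)`; or `y = s_a z s_a` is `z` with its cycles relabelled by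
`s_a`, which preserves every order relation in the hypotheses. In both cases the inequalities for
`w = w' s_a` follow from those for `w'`. Coxeter lengths are computed as inversion numbers.
-/

section

open Equiv Finset

variable {n : ℕ}

section SimpleTranspositions

lemma simpleT_of_le {c : ℕ} (h : n ≤ c + 1) : simpleT n c = 1 := by
  simp [simpleT, Nat.not_lt.2 h]

lemma simpleT_eq_swap {a b : Fin n} (hab : (b : ℕ) = a + 1) : simpleT n a = swap a b := by
  have h : (a : ℕ) + 1 < n := hab ▸ b.isLt
  rw [simpleT, dif_pos h]
  congr
  exact hab.symm

lemma exists_adjacent {c : ℕ} (h : c + 1 < n) : ∃ a b : Fin n, (a : ℕ) = c ∧ (b : ℕ) = a + 1 :=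
  ⟨⟨c, by omega⟩, ⟨c + 1, h⟩, rfl, rfl⟩

lemma simpleT_inv (c : ℕ) : (simpleT n c)⁻¹ = simpleT n c := by
  unfold simpleT; split_ifs <;> simp

lemma wordProd_concat (l : List ℕ) (c : ℕ) :
    wordProd n (l ++ [c]) = wordProd n l * simpleT n c := by
  simp [wordProd]

lemma lt_of_val_eq_add_one {a b : Fin n} (hab : (b : ℕ) = a + 1) : a < b :=
  Fin.lt_def.2 (by omega)

lemma Equiv.Perm.apply_lt_or_gt (w : Perm (Fin n)) {a b : Fin n} (hab : (b : ℕ) = a + 1) :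
    w a < w b ∨ w b < w a :=
  lt_or_gt_of_ne (w.injective.ne (lt_of_val_eq_add_one hab).ne)

lemma swap_lt_swap {a b x y : Fin n} (hab : (b : ℕ) = a + 1) (hxy : x < y)
    (hne : ¬(x = a ∧ y = b)) : swap a b x < swap a b y := by
  rw [Fin.lt_def] at hxy ⊢
  simp only [swap_apply_def]
  split_ifs <;> simp_all [Fin.ext_iff] <;> omega

lemma swap_le_swap {a b x y : Fin n} (hab : (b : ℕ) = a + 1) (hxy : x ≤ y)
    (hne : ¬(x = a ∧ y = b)) : swap a b x ≤ swap a b y := by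
  rcases hxy.eq_or_lt with rfl | h
  · rfl
  · exact (swap_lt_swap hab h hne).le

end SimpleTranspositions

section Inversions

def inversions (w : Perm (Fin n)) : Finset (Fin n × Fin n) :=
  {p | p.1 < p.2 ∧ w p.2 < w p.1}

def numInv (w : Perm (Fin n)) : ℕ := #(inversions w)

lemma mem_inversions {w : Perm (Fin n)} {p : Fin n × Fin n} :
    p ∈ inversions w ↔ p.1 < p.2 ∧ w p.2 < w p.1 := by
  simp [inversions]

lemma numInv_one : numInv (1 : Perm (Fin n)) = 0 := by
  simp only [numInv, card_eq_zero, filter_eq_empty_iff, inversions]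
  exact fun _ _ ⟨h, h'⟩ => h.not_gt h'

lemma inversions_mul_swap {w : Perm (Fin n)} {a b : Fin n} (hab : (b : ℕ) = a + 1)
    (h : w a < w b) :
    inversions (w * swap a b) =
      insert (a, b) ((inversions w).map (prodCongr (swap a b) (swap a b)).toEmbedding) := by
  ext ⟨x, y⟩
  simp only [mem_insert, mem_map_equiv, mem_inversions, Prod.mk.injEq, prodCongr_symm,
    symm_swap, prodCongr_apply, Prod.map, Perm.mul_apply]
  constructor
  · rintro ⟨hxy, hw⟩
    by_cases hxyab : x = a ∧ y = b
    · exact Or.inl hxyab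
    · exact Or.inr ⟨swap_lt_swap hab hxy hxyab, hw⟩
  · rintro (⟨rfl, rfl⟩ | ⟨hxy, hw⟩)
    · rw [swap_apply_left, swap_apply_right]
      exact ⟨lt_of_val_eq_add_one hab, h⟩
    · refine ⟨?_, hw⟩
      by_cases hba : swap a b x = a ∧ swap a b y = b
      · rw [hba.1, hba.2] at hw
        exact absurd h hw.not_gt
      · simpa using swap_lt_swap hab hxy hba

lemma numInv_mul_swap_of_lt {w : Perm (Fin n)} {a b : Fin n} (hab : (b : ℕ) = a + 1)
    (h : w a < w b) : numInv (w * swap a b) = numInv w + 1 := by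
  rw [numInv, inversions_mul_swap hab h, card_insert_of_notMem, card_map, numInv]
  rw [mem_map_equiv, mem_inversions]
  simp only [prodCongr_symm, symm_swap, prodCongr_apply, Prod.map, swap_apply_left,
    swap_apply_right, Fin.lt_def]
  omega

lemma numInv_mul_swap_of_gt {w : Perm (Fin n)} {a b : Fin n} (hab : (b : ℕ) = a + 1)
    (h : w b < w a) : numInv (w * swap a b) + 1 = numInv w := by
  have h' : (w * swap a b) a < (w * swap a b) b := by simpa using h
  simpa [mul_assoc] using (numInv_mul_swap_of_lt hab h').symm

lemma numInv_mul_simpleT_le (w : Perm (Fin n)) (c : ℕ) :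
    numInv (w * simpleT n c) ≤ numInv w + 1 := by
  by_cases hc : c + 1 < n
  · obtain ⟨a, b, rfl, hab⟩ := exists_adjacent hc
    rw [simpleT_eq_swap hab]
    rcases w.apply_lt_or_gt hab with h | h
    · rw [numInv_mul_swap_of_lt hab h]
    · have := numInv_mul_swap_of_gt hab h; omega
  · simp [simpleT_of_le (Nat.not_lt.1 hc)]

lemma numInv_inv (w : Perm (Fin n)) : numInv w⁻¹ = numInv w := by
  refine card_bij' (fun p _ => (w⁻¹ p.2, w⁻¹ p.1)) (fun p _ => (w p.2, w p.1))
    ?_ ?_ (by simp) (by simp) <;>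
  · intro p hp
    rw [mem_inversions] at hp ⊢
    exact ⟨by simpa using hp.2, by simpa using hp.1⟩

lemma numInv_wordProd_le (l : List ℕ) : numInv (wordProd n l) ≤ l.length := by
  induction l using List.reverseRecOn with
  | nil => simp [wordProd, numInv_one]
  | append_singleton l c ih =>
    rw [wordProd_concat, List.length_append, List.length_singleton]
    exact (numInv_mul_simpleT_le _ c).trans (by omega)

lemma exists_adjacent_gt_of_ne_one {w : Perm (Fin n)} (hw : w ≠ 1) :
    ∃ a b : Fin n, (b : ℕ) = a + 1 ∧ w b < w a := by
  by_contra! hmono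
  apply hw
  cases n with
  | zero => exact Subsingleton.elim _ _
  | succ m =>
    have : StrictMono w := Fin.strictMono_iff_lt_succ.2 fun i =>
      (hmono i.castSucc i.succ rfl).lt_of_ne (w.injective.ne (Fin.castSucc_lt_succ (i := i)).ne)
    exact Equiv.ext (congrFun this.eq_id)

lemma exists_wordProd_length_numInv (w : Perm (Fin n)) :
    ∃ l, wordProd n l = w ∧ l.length = numInv w := by
  induction hk : numInv w using Nat.strong_induction_on generalizing w with
  | _ k ih =>
    by_cases hw : w = 1
    · subst hw; exact ⟨[], rfl, by simp [← hk, numInv_one]⟩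
    obtain ⟨a, b, hab, h⟩ := exists_adjacent_gt_of_ne_one hw
    have hdec := numInv_mul_swap_of_gt hab h
    obtain ⟨l, hl, hlen⟩ := ih _ (by omega) (w * swap a b) rfl
    refine ⟨l ++ [(a : ℕ)], ?_, by simp; omega⟩
    rw [wordProd_concat, hl, simpleT_eq_swap hab, mul_assoc, swap_mul_self, mul_one]

end Inversions

section Length

lemma len_wordProd_le (l : List ℕ) : len n (wordProd n l) ≤ l.length :=
  Nat.sInf_le ⟨l, rfl, rfl⟩

theorem len_eq_numInv (w : Perm (Fin n)) : len n w = numInv w := by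
  obtain ⟨l, rfl, hlen⟩ := exists_wordProd_length_numInv w
  refine le_antisymm (hlen ▸ len_wordProd_le l) ?_
  obtain ⟨l', hlen', hl'⟩ := Nat.sInf_mem (⟨l.length, l, rfl, rfl⟩ :
    {p | ∃ l', l'.length = p ∧ wordProd n l' = wordProd n l}.Nonempty)
  rw [len, ← hlen', ← hl']
  exact numInv_wordProd_le l'

lemma len_one : len n 1 = 0 := by
  rw [len_eq_numInv, numInv_one]

lemma len_inv (w : Perm (Fin n)) : len n w⁻¹ = len n w := by
  rw [len_eq_numInv, len_eq_numInv, numInv_inv]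

lemma len_mul_swap_of_lt {w : Perm (Fin n)} {a b : Fin n} (hab : (b : ℕ) = a + 1)
    (h : w a < w b) : len n (w * swap a b) = len n w + 1 := by
  rw [len_eq_numInv, len_eq_numInv, numInv_mul_swap_of_lt hab h]

lemma len_mul_swap_of_gt {w : Perm (Fin n)} {a b : Fin n} (hab : (b : ℕ) = a + 1)
    (h : w b < w a) : len n (w * swap a b) + 1 = len n w := by
  rw [len_eq_numInv, len_eq_numInv, numInv_mul_swap_of_gt hab h]

lemma len_lt_len_mul_swap_iff {w : Perm (Fin n)} {a b : Fin n} (hab : (b : ℕ) = a + 1) :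
    len n w < len n (w * swap a b) ↔ w a < w b := by
  rcases w.apply_lt_or_gt hab with h | h
  · simp [len_mul_swap_of_lt hab h, h]
  · have := len_mul_swap_of_gt hab h
    simp only [h.not_gt, iff_false]
    omega

lemma len_mul_simpleT_le (w : Perm (Fin n)) (c : ℕ) :
    len n (w * simpleT n c) ≤ len n w + 1 := by
  rw [len_eq_numInv, len_eq_numInv]
  exact numInv_mul_simpleT_le w c

lemma len_simpleT_mul_le (c : ℕ) (w : Perm (Fin n)) :
    len n (simpleT n c * w) ≤ len n w + 1 := by
  rw [← len_inv, mul_inv_rev, simpleT_inv, ← len_inv w]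
  exact len_mul_simpleT_le w⁻¹ c

end Length

section DemazureStep

variable {w : Perm (Fin n)} {a b : Fin n}

lemma demStepR_of_lt (hab : (b : ℕ) = a + 1) (h : w a < w b) :
    demStepR n w a = w * swap a b := by
  rw [demStepR, simpleT_eq_swap hab, if_pos ((len_lt_len_mul_swap_iff hab).2 h)]

lemma demStepR_of_gt (hab : (b : ℕ) = a + 1) (h : w b < w a) : demStepR n w a = w := by
  rw [demStepR, simpleT_eq_swap hab, if_neg (by rw [len_lt_len_mul_swap_iff hab]; exact h.not_gt)]

lemma demStepR_of_le {c : ℕ} (h : n ≤ c + 1) (w : Perm (Fin n)) : demStepR n w c = w := by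
  simp [demStepR, simpleT_of_le h]

lemma demStepL_eq_inv_demStepR_inv (c : ℕ) (w : Perm (Fin n)) :
    demStepL n c w = (demStepR n w⁻¹ c)⁻¹ := by
  have h : len n (w⁻¹ * simpleT n c) = len n (simpleT n c * w) := by
    rw [← len_inv, mul_inv_rev, simpleT_inv, inv_inv]
  rw [demStepL, demStepR, h, len_inv]
  split_ifs <;> simp [simpleT_inv]

lemma inv_demStepL (c : ℕ) (w : Perm (Fin n)) : (demStepL n c w)⁻¹ = demStepR n w⁻¹ c := by
  rw [demStepL_eq_inv_demStepR_inv, inv_inv]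

lemma inv_demStepR (w : Perm (Fin n)) (c : ℕ) : (demStepR n w c)⁻¹ = demStepL n c w⁻¹ := by
  rw [demStepL_eq_inv_demStepR_inv, inv_inv]

lemma demStepL_of_lt (hab : (b : ℕ) = a + 1) (h : w⁻¹ a < w⁻¹ b) :
    demStepL n a w = swap a b * w := by
  rw [demStepL_eq_inv_demStepR_inv, demStepR_of_lt hab h, mul_inv_rev, swap_inv, inv_inv]

lemma demStepL_of_gt (hab : (b : ℕ) = a + 1) (h : w⁻¹ b < w⁻¹ a) : demStepL n a w = w := by
  rw [demStepL_eq_inv_demStepR_inv, demStepR_of_gt hab h, inv_inv]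

lemma demStepL_of_le {c : ℕ} (h : n ≤ c + 1) (w : Perm (Fin n)) : demStepL n c w = w := by
  rw [demStepL_eq_inv_demStepR_inv, demStepR_of_le h, inv_inv]

lemma demStepR_demStepL_of_lt_of_gt {u : Perm (Fin n)} {a' b' : Fin n}
    (ha : (a' : ℕ) = a + 1) (hb : (b' : ℕ) = b + 1) (hL : u⁻¹ a < u⁻¹ a') (hR : u b' < u b) :
    demStepR n (demStepL n a u) b = demStepL n a (demStepR n u b) := by
  rw [demStepL_of_lt ha hL, demStepR_of_gt hb hR, demStepL_of_lt ha hL, demStepR_of_gt hb]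
  refine swap_lt_swap ha hR ?_
  rintro ⟨h1, h2⟩
  simp only [← h1, ← h2, Perm.coe_inv, symm_apply_apply] at hL
  exact hL.not_gt (lt_of_val_eq_add_one hb)

/-- Associativity of the Demazure product on generators: `(s_a ∘ u) ∘ s_b = s_a ∘ (u ∘ s_b)`. -/
lemma demStepR_demStepL_comm (a b : ℕ) (u : Perm (Fin n)) :
    demStepR n (demStepL n a u) b = demStepL n a (demStepR n u b) := by
  by_cases ha : a + 1 < n
  swap
  · rw [demStepL_of_le (not_lt.1 ha), demStepL_of_le (not_lt.1 ha)]
  by_cases hb : b + 1 < n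
  swap
  · rw [demStepR_of_le (not_lt.1 hb), demStepR_of_le (not_lt.1 hb)]
  obtain ⟨A, A', rfl, hA⟩ := exists_adjacent ha
  obtain ⟨B, B', rfl, hB⟩ := exists_adjacent hb
  rcases u⁻¹.apply_lt_or_gt hA with hL | hL <;> rcases u.apply_lt_or_gt hB with hR | hR
  · rw [demStepL_of_lt hA hL, demStepR_of_lt hB hR]
    by_cases hc : u B = A ∧ u B' = A'
    · have hcomm : u * swap B B' = swap A A' * u := by rw [mul_swap_eq_swap_mul, hc.1, hc.2]
      have hR' : (swap A A' * u) B' < (swap A A' * u) B := by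
        rw [Perm.mul_apply, Perm.mul_apply, hc.1, hc.2, swap_apply_left, swap_apply_right]
        exact lt_of_val_eq_add_one hA
      have hL' : (swap A A' * u)⁻¹ A' < (swap A A' * u)⁻¹ A := by
        simp only [mul_inv_rev, swap_inv, Perm.mul_apply, ← hc.1, ← hc.2,
          Perm.coe_inv, symm_apply_apply, swap_apply_left, swap_apply_right]
        exact lt_of_val_eq_add_one hB
      rw [demStepR_of_gt hB hR', hcomm, demStepL_of_gt hA hL']
    · rw [demStepR_of_lt hB, demStepL_of_lt hA, mul_assoc]
      · simpa [swap_apply_self] using swap_lt_swap hB hL (by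
          rintro ⟨h1, h2⟩; exact hc ⟨by simp [← h1], by simp [← h2]⟩)
      · simpa using swap_lt_swap hA hR hc
  · exact demStepR_demStepL_of_lt_of_gt hA hB hL hR
  · apply inv_injective
    rw [inv_demStepR, inv_demStepL, inv_demStepL, inv_demStepR]
    exact (demStepR_demStepL_of_lt_of_gt hB hA (by simpa using hR) hL).symm
  · rw [demStepL_of_gt hA hL, demStepR_of_gt hB hR, demStepL_of_gt hA hL]

end DemazureStep

section DemazureWord

lemma demWord_append (p q : List ℕ) :
    demWord n (p ++ q) = q.foldl (demStepR n) (demWord n p) := by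
  rw [demWord, List.foldl_append, demWord]

lemma demWord_concat (p : List ℕ) (c : ℕ) :
    demWord n (p ++ [c]) = demStepR n (demWord n p) c := by
  rw [demWord_append]
  rfl

lemma foldl_demStepR_demStepL (m : List ℕ) (c : ℕ) (u : Perm (Fin n)) :
    m.foldl (demStepR n) (demStepL n c u) = demStepL n c (m.foldl (demStepR n) u) := by
  induction m generalizing u with
  | nil => rfl
  | cons x m ih => rw [List.foldl_cons, List.foldl_cons, demStepR_demStepL_comm, ih]

lemma demWord_cons (c : ℕ) (m : List ℕ) :
    demWord n (c :: m) = demStepL n c (demWord n m) := by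
  have h : demStepR n 1 c = demStepL n c 1 := by simp [demStepR, demStepL]
  rw [demWord, List.foldl_cons, h, foldl_demStepR_demStepL, demWord]

lemma demWord_reverse (m : List ℕ) : demWord n m.reverse = (demWord n m)⁻¹ := by
  induction m using List.reverseRecOn with
  | nil => simp [demWord]
  | append_singleton m c ih =>
    rw [List.reverse_concat, demWord_cons, ih, demWord_concat, inv_demStepR]

lemma inv_demWord_reverse_append_self (m : List ℕ) :
    (demWord n (m.reverse ++ m))⁻¹ = demWord n (m.reverse ++ m) := by
  rw [← demWord_reverse, List.reverse_append, List.reverse_reverse]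

lemma demWord_reverse_append_self_concat (m : List ℕ) (c : ℕ) :
    demWord n ((m ++ [c]).reverse ++ (m ++ [c])) =
      demStepL n c (demStepR n (demWord n (m.reverse ++ m)) c) := by
  rw [List.reverse_concat, List.cons_append, demWord_cons, ← List.append_assoc, demWord_concat]

/-- On a reduced word every Demazure step goes up. -/
lemma demWord_eq_wordProd_of_reduced {l : List ℕ} (hred : l.length = len n (wordProd n l)) :
    demWord n l = wordProd n l := by
  induction l using List.reverseRecOn with
  | nil => rfl
  | append_singleton m c ih =>
    have hm := len_wordProd_le (n := n) m
    have hmc := len_mul_simpleT_le (wordProd n m) c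
    rw [wordProd_concat, List.length_append, List.length_singleton] at hred
    rw [demWord_concat, ih (by omega), wordProd_concat, demStepR, if_pos (by omega)]

lemma len_demStepL_mul_simpleT_lt {u : Perm (Fin n)} {c : ℕ}
    (h : len n (u * simpleT n c) < len n u) (a : ℕ) :
    len n (demStepL n a u * simpleT n c) < len n (demStepL n a u) := by
  unfold demStepL
  split_ifs with hlt
  · have := len_simpleT_mul_le a (u * simpleT n c)
    rw [mul_assoc]
    omega
  · exact h

lemma len_demWord_append_mul_simpleT_lt {q : List ℕ} {c : ℕ}
    (h : len n (demWord n q * simpleT n c) < len n (demWord n q)) (p : List ℕ) :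
    len n (demWord n (p ++ q) * simpleT n c) < len n (demWord n (p ++ q)) := by
  induction p with
  | nil => exact h
  | cons x p ih =>
    rw [List.cons_append, demWord_cons]
    exact len_demStepL_mul_simpleT_lt ih x

end DemazureWord

section Atoms

lemma reduced_of_reduced_concat {m : List ℕ} {c : ℕ}
    (hred : (m ++ [c]).length = len n (wordProd n (m ++ [c]))) :
    m.length = len n (wordProd n m) ∧
      len n (wordProd n m) < len n (wordProd n m * simpleT n c) := by
  have hm := len_wordProd_le (n := n) m
  have hmc := len_mul_simpleT_le (wordProd n m) c
  rw [wordProd_concat, List.length_append, List.length_singleton] at hred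
  omega

lemma DemSelf.mul_swap {v z : Perm (Fin n)} (hv : DemSelf n v z) {a b : Fin n}
    (hab : (b : ℕ) = a + 1) (h : v a < v b) :
    DemSelf n (v * swap a b) (demStepL n a (demStepR n z a)) := by
  obtain ⟨l, rfl, hlen, rfl⟩ := hv
  refine ⟨l ++ [(a : ℕ)], by rw [wordProd_concat, simpleT_eq_swap hab], ?_,
    demWord_reverse_append_self_concat l a⟩
  rw [len_mul_swap_of_lt hab h, List.length_append, List.length_singleton, hlen]

lemma DemSelf.apply_lt_of_apply_lt {v z : Perm (Fin n)} (hv : DemSelf n v z) {a b : Fin n}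
    (hab : (b : ℕ) = a + 1) (h : v b < v a) : z b < z a := by
  obtain ⟨l, rfl, hlen, rfl⟩ := hv
  have hdesc : len n (demWord n l * simpleT n a) < len n (demWord n l) := by
    rw [demWord_eq_wordProd_of_reduced hlen, simpleT_eq_swap hab, ← len_mul_swap_of_gt hab h]
    exact Nat.lt_succ_self _
  have := len_demWord_append_mul_simpleT_lt hdesc l.reverse
  rw [simpleT_eq_swap hab] at this
  refine (Perm.apply_lt_or_gt _ hab).resolve_left fun hasc => ?_
  rw [len_mul_swap_of_lt hab hasc] at this
  omega

lemma IsAtomOf.eq_one {y : Perm (Fin n)} (hw : IsAtomOf n y 1) : y = 1 := by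
  obtain ⟨l, -, hlen, rfl⟩ := hw.1
  rw [len_one, List.length_eq_zero_iff] at hlen
  subst hlen
  rfl

/-- Here `w = w' s_a` comes from a reduced word of `w` ending in `a`, and `z = w'⁻¹ ∘ w'`.
If `z` had a descent at `a`, then `y = z` would have the shorter atom `w'`. A competitor `v`
for `z` has an ascent at `a` (a descent would pass to `z`), so `v s_a` competes for `y`. -/
theorem IsAtomOf.exists_eq_mul_swap {y w : Perm (Fin n)} (hw : IsAtomOf n y w) (hne : w ≠ 1) :
    ∃ (w' z : Perm (Fin n)) (a b : Fin n), (b : ℕ) = a + 1 ∧ IsAtomOf n z w' ∧ z⁻¹ = z ∧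
      z a < z b ∧ w' a < w' b ∧ w = w' * swap a b ∧ y = demStepL n a (z * swap a b) := by
  obtain ⟨⟨l, hl, hlen, hy⟩, hmin⟩ := hw
  obtain rfl | ⟨m, c, rfl⟩ := l.eq_nil_or_concat'
  · exact absurd hl.symm hne
  subst hl
  obtain ⟨hm, hasc⟩ := reduced_of_reduced_concat hlen
  have hc : c + 1 < n := by
    by_contra h
    rw [simpleT_of_le (not_lt.1 h), mul_one] at hasc
    exact lt_irrefl _ hasc
  obtain ⟨a, b, rfl, hab⟩ := exists_adjacent hc
  set w' := wordProd n m
  set z := demWord n (m.reverse ++ m)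
  rw [simpleT_eq_swap hab] at hasc
  have hw' : w' a < w' b := (len_lt_len_mul_swap_iff hab).1 hasc
  have hlen_w : len n (wordProd n (m ++ [(a : ℕ)])) = len n w' + 1 := by
    rw [wordProd_concat, simpleT_eq_swap hab, len_mul_swap_of_lt hab hw']
  have hz : z⁻¹ = z := inv_demWord_reverse_append_self m
  have hyz : y = demStepL n a (demStepR n z a) := by
    rw [← hy, demWord_reverse_append_self_concat]
  have hw'z : DemSelf n w' z := ⟨m, rfl, hm, rfl⟩
  have hza : z a < z b := by
    refine (z.apply_lt_or_gt hab).resolve_right fun hzba => ?_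
    have hy_eq : y = z := by
      rw [hyz, demStepR_of_gt hab hzba, demStepL_of_gt hab (by rwa [hz])]
    have := hmin w' (hy_eq ▸ hw'z)
    omega
  refine ⟨w', z, a, b, hab, ⟨hw'z, fun v hv => ?_⟩, hz, hza, hw',
    by rw [wordProd_concat, simpleT_eq_swap hab], by rw [hyz, demStepR_of_lt hab hza]⟩
  rcases v.apply_lt_or_gt hab with hv' | hv'
  · have := hmin _ (hyz ▸ hv.mul_swap hab hv')
    rw [len_mul_swap_of_lt hab hv'] at this
    omega
  · exact absurd (hv.apply_lt_of_apply_lt hab hv') hza.not_gt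

end Atoms

section CycleConditions

def TwoCycleConditions (y w : Perm (Fin n)) : Prop :=
  ∀ i j k l : Fin n, i ≤ j → y i = j → k ≤ l → y k = l → i < k → j < l →
    w l ≤ w k ∧ w i < w l ∧ w j ≤ w i

lemma twoCycleConditions_one : TwoCycleConditions (1 : Perm (Fin n)) 1 := by
  rintro i _ k _ - rfl - rfl hik -
  exact ⟨le_rfl, hik, le_rfl⟩

variable {z w : Perm (Fin n)} {a b : Fin n}

lemma cycle_mul_swap_cases (hab : (b : ℕ) = a + 1) (hza : z a = a) (hzb : z b = b)
    {i j : Fin n} (hij : i ≤ j) (h : (z * swap a b) i = j) :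
    (i = a ∧ j = b) ∨ (i ≠ a ∧ i ≠ b ∧ j ≠ a ∧ j ≠ b ∧ z i = j) := by
  rw [Perm.mul_apply] at h
  by_cases hia : i = a
  · subst hia
    rw [swap_apply_left, hzb] at h
    exact Or.inl ⟨rfl, h.symm⟩
  by_cases hib : i = b
  · subst hib
    rw [swap_apply_right, hza] at h
    subst h
    exact absurd hij (not_le.2 (lt_of_val_eq_add_one hab))
  rw [swap_apply_of_ne_of_ne hia hib] at h
  refine Or.inr ⟨hia, hib, ?_, ?_, h⟩ <;> rintro rfl
  · exact hia (z.injective (h.trans hza.symm))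
  · exact hib (z.injective (h.trans hzb.symm))

lemma TwoCycleConditions.mul_swap (h : TwoCycleConditions z w) (hab : (b : ℕ) = a + 1)
    (hza : z a = a) (hzb : z b = b) (hw : w a < w b) :
    TwoCycleConditions (z * swap a b) (w * swap a b) := by
  intro i j k l hij hi hkl hk hik hjl
  simp only [Perm.mul_apply]
  rcases cycle_mul_swap_cases hab hza hzb hij hi with ⟨hia, hjb⟩ | ⟨hia, hib, hja, hjb, hi'⟩ <;>
    rcases cycle_mul_swap_cases hab hza hzb hkl hk with ⟨hka, hlb⟩ | ⟨hka, hkb, hla, hlb, hk'⟩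
  · exact absurd (hia ▸ hka ▸ hik) (lt_irrefl _)
  · subst i j
    have hbk : b < k := Fin.lt_def.2 <| by
      have := Fin.lt_def.1 hik; have := Fin.val_ne_of_ne hkb; omega
    obtain ⟨h1, h2, -⟩ := h a a k l le_rfl hza hkl hk' hik (hik.trans_le hkl)
    obtain ⟨-, h3, -⟩ := h b b k l le_rfl hzb hkl hk' hbk (hbk.trans_le hkl)
    rw [swap_apply_of_ne_of_ne hka hkb, swap_apply_of_ne_of_ne hla hlb, swap_apply_left,
      swap_apply_right]
    exact ⟨h1, h3, hw.le⟩
  · subst k l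
    have hja' : j < a := Fin.lt_def.2 <| by
      have := Fin.lt_def.1 hjl; have := Fin.val_ne_of_ne hja; omega
    obtain ⟨-, h1, h2⟩ := h i j a a hij hi' le_rfl hza hik hja'
    rw [swap_apply_of_ne_of_ne hia hib, swap_apply_of_ne_of_ne hja hjb, swap_apply_left,
      swap_apply_right]
    exact ⟨hw.le, h1, h2⟩
  · rw [swap_apply_of_ne_of_ne hia hib, swap_apply_of_ne_of_ne hja hjb,
      swap_apply_of_ne_of_ne hka hkb, swap_apply_of_ne_of_ne hla hlb]
    exact h i j k l hij hi' hkl hk' hik hjl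

lemma not_eq_of_apply_swap (hab : (b : ℕ) = a + 1) (hz : Function.Involutive z)
    (hlt : z a < z b) {i j : Fin n} (h : z (swap a b i) = swap a b j) : ¬(i = a ∧ j = b) := by
  rintro ⟨hia, hjb⟩
  subst i j
  rw [swap_apply_left, swap_apply_right] at h
  have hza : z a = b := by rw [← h, hz]
  rw [hza, h] at hlt
  exact hlt.not_gt (lt_of_val_eq_add_one hab)

lemma swap_lt_swap_of_apply_swap (hab : (b : ℕ) = a + 1) (hlt : z a < z b)
    (hfix : ¬(z a = a ∧ z b = b)) {i j k l : Fin n} (hi : z (swap a b i) = swap a b j)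
    (hk : z (swap a b k) = swap a b l) (hik : i < k) (hjl : j < l) : swap a b i < swap a b k := by
  by_contra hcon
  obtain ⟨hia, hkb⟩ : i = a ∧ k = b := by
    by_contra hne
    exact hcon (swap_lt_swap hab hik hne)
  subst i k
  rw [swap_apply_left] at hi
  rw [swap_apply_right] at hk
  by_cases hjl' : j = a ∧ l = b
  · obtain ⟨hja, hlb⟩ := hjl'
    subst j l
    rw [swap_apply_left] at hi
    rw [swap_apply_right] at hk
    exact hfix ⟨hk, hi⟩
  · rw [hi, hk] at hlt
    exact hlt.not_gt (swap_lt_swap hab hjl hjl')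

lemma TwoCycleConditions.swap_mul_mul_swap (h : TwoCycleConditions z w) (hab : (b : ℕ) = a + 1)
    (hz : Function.Involutive z) (hlt : z a < z b) (hfix : ¬(z a = a ∧ z b = b)) :
    TwoCycleConditions (swap a b * z * swap a b) (w * swap a b) := by
  intro i j k l hij hi hkl hk hik hjl
  have conj : ∀ {x x'}, (swap a b * z * swap a b) x = x' → z (swap a b x) = swap a b x' := by
    rintro x x' rfl
    simp [Perm.mul_apply]
  have hi' := conj hi
  have hk' := conj hk
  have hj' : z (swap a b j) = swap a b i := by rw [← hi', hz]
  have hl' : z (swap a b l) = swap a b k := by rw [← hk', hz]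
  simpa only [Perm.mul_apply] using h _ _ _ _
    (swap_le_swap hab hij (not_eq_of_apply_swap hab hz hlt hi')) hi'
    (swap_le_swap hab hkl (not_eq_of_apply_swap hab hz hlt hk')) hk'
    (swap_lt_swap_of_apply_swap hab hlt hfix hi' hk' hik hjl)
    (swap_lt_swap_of_apply_swap hab hlt hfix hj' hl' hjl hik)

end CycleConditions

theorem IsAtomOf.twoCycleConditions {y w : Perm (Fin n)} (hw : IsAtomOf n y w) :
    TwoCycleConditions y w := by
  induction hk : len n w using Nat.strong_induction_on generalizing y w with
  | _ k ih =>
  by_cases hw1 : w = 1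
  · subst hw1
    rw [hw.eq_one]
    exact twoCycleConditions_one
  obtain ⟨w', z, a, b, hab, hw', hz, hza, hw'a, rfl, rfl⟩ := hw.exists_eq_mul_swap hw1
  have ih' := ih _ (by rw [← hk, len_mul_swap_of_lt hab hw'a]; omega) hw' rfl
  have hzz : Function.Involutive z := fun x => by
    simpa only [← Perm.inv_def, hz] using z.symm_apply_apply x
  by_cases hfix : z a = a ∧ z b = b
  · have hL : (z * swap a b)⁻¹ b < (z * swap a b)⁻¹ a := by
      simp only [mul_inv_rev, swap_inv, hz, Perm.mul_apply, hfix.1, hfix.2, swap_apply_left,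
        swap_apply_right]
      exact lt_of_val_eq_add_one hab
    rw [demStepL_of_gt hab hL]
    exact ih'.mul_swap hab hfix.1 hfix.2 hw'a
  · have hL : (z * swap a b)⁻¹ a < (z * swap a b)⁻¹ b := by
      simpa only [mul_inv_rev, swap_inv, hz, Perm.mul_apply] using swap_lt_swap hab hza hfix
    rw [demStepL_of_lt hab hL, ← mul_assoc]
    exact ih'.swap_mul_mul_swap hab hzz hza hfix

end

theorem atom_two_cycle_conditions_general (n : ℕ) (y w : Equiv.Perm (Fin n))
    (hw : IsAtomOf n y w) (i j k l : Fin n) (hij : i ≤ j) (hci : y i = j)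
    (hkl : k ≤ l) (hck : y k = l) (hik : i < k) (hjl : j < l) :
    w l ≤ w k ∧ w i < w l ∧ w j ≤ w i :=
  hw.twoCycleConditions i j k l hij hci hkl hck hik hjl

/-- For an atom `w` of an involution `y` and cycles `(i,j)`, `(k,l)` of `y` with
`i < k` and `j < l`: `w(k) ≥ w(l) > w(i) ≥ w(j)`. -/
theorem atom_two_cycle_conditions (n : ℕ) (y w : Equiv.Perm (Fin n)) (hy : y * y = 1)
    (hw : IsAtomOf n y w) (i j k l : Fin n) (hij : i ≤ j) (hci : y i = j)
    (hkl : k ≤ l) (hck : y k = l) (hik : i < k) (hjl : j < l) :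
    w l ≤ w k ∧ w i < w l ∧ w j ≤ w i :=
  atom_two_cycle_conditions_general n y w hw i j k l hij hci hkl hck hik hjl
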